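/- Let Σ be a finite alphabet and M a rational Kripke model over Σ whose state set is all of Σ*, whose atomic relations R_π are rational relations on Σ*, and whose atomic valuations V(p) are regular languages. Then, by mutual induction over the syntax of WPDL: for every WPDL program α the relation R_α ⊆ Σ* × Σ* is rational, and for every WPDL formula φ the extension [[φ]]_M ⊆ Σ* is a regular language. -/

import Mathlib

/-! By simultaneous induction on formulas and programs. Programs are handled by closure of
rational relations under inverse, union and composition, together with rationality of the
diagonal `{(u, u) | u ∈ E}` and of `{(u ++ v, v) | u ∈ E}` for regular `E`; formulas by closure
of regular languages under complement and union, regularity of singletons, and regularity of the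
preimage `{u | ∃ v ∈ E, (u, v) ∈ R}` of a regular language under a rational relation. All of this
reduces to closure of regular languages under images and preimages of `List.filterMap`,
intersection and concatenation. For composition, two witnesses that agree on the middle tape
are merged into one word over a three-tape alphabet. -/

/-- Rational binary relations on words, presented by a regular language over
`Option α × Option α` via the two asynchronous projections. -/
def IsRationalRel {α : Type} (R : Set (List α × List α)) : Prop :=
  ∃ L : Language (Option α × Option α), L.IsRegular ∧
    R = { p | ∃ z ∈ L, p = (z.filterMap Prod.fst, z.filterMap Prod.snd) }

mutual
  /-- WPDL formulas over the alphabet `α`, atomic propositions `AP`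
  and atomic programs `REL`. -/
  inductive WForm (α AP REL : Type) : Type where
    | atom : AP → WForm α AP REL
    | letter : α → WForm α AP REL
    | neg : WForm α AP REL → WForm α AP REL
    | disj : WForm α AP REL → WForm α AP REL → WForm α AP REL
    | dia : WProg α AP REL → WForm α AP REL → WForm α AP REL

  /-- WPDL programs over the alphabet `α`, atomic propositions `AP`
  and atomic programs `REL`. -/
  inductive WProg (α AP REL : Type) : Type where
    | base : REL → WProg α AP REL
    | inv : WProg α AP REL → WProg α AP REL
    | union : WProg α AP REL → WProg α AP REL → WProg α AP REL
    | comp : WProg α AP REL → WProg α AP REL → WProg α AP REL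
    | test : WForm α AP REL → WProg α AP REL
    | push : WForm α AP REL → WProg α AP REL
end

mutual
  /-- The extension `[[φ]]` of a WPDL formula in the Kripke word-model with state
  set `Σ*`, atomic relations `Rb` and valuation `V`. -/
  def WExt {α AP REL : Type} (Rb : REL → Set (List α × List α))
      (V : AP → Set (List α)) : WForm α AP REL → Set (List α)
    | .atom p => V p
    | .letter a => {[a]}
    | .neg φ => (WExt Rb V φ)ᶜ
    | .disj φ ψ => WExt Rb V φ ∪ WExt Rb V ψ
    | .dia β φ => { u | ∃ v ∈ WExt Rb V φ, (u, v) ∈ WRel Rb V β }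

  /-- The relation `R_β` associated with a WPDL program `β` in the Kripke word-model
  with state set `Σ*`, atomic relations `Rb` and valuation `V`. -/
  def WRel {α AP REL : Type} (Rb : REL → Set (List α × List α))
      (V : AP → Set (List α)) : WProg α AP REL → Set (List α × List α)
    | .base π => Rb π
    | .inv β => { p | (p.2, p.1) ∈ WRel Rb V β }
    | .union β γ => WRel Rb V β ∪ WRel Rb V γ
    | .comp β γ => { p | ∃ w, (p.1, w) ∈ WRel Rb V β ∧ (w, p.2) ∈ WRel Rb V γ }
    | .test φ => { p | ∃ u ∈ WExt Rb V φ, p = (u, u) }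
    | .push φ => { p | ∃ u ∈ WExt Rb V φ, ∃ v : List α, p = (u ++ v, v) }
end

namespace Language

variable {β γ : Type}

theorem IsRegular.preimage_filterMap (g : β → Option γ) {L : Language γ} (hL : L.IsRegular) :
    IsRegular (List.filterMap g ⁻¹' L : Language β) := by
  obtain ⟨σ, _, M, rfl⟩ := hL
  let N : DFA β σ := ⟨fun s b => (g b).elim s (M.step s), M.start, M.accept⟩
  have hN : ∀ x s, N.evalFrom s x = M.evalFrom s (x.filterMap g) := by
    intro x
    induction x with
    | nil => intro s; rfl
    | cons b x ih =>
      intro s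
      cases hb : g b <;> simp [N, DFA.evalFrom_cons, hb, ih]
  exact ⟨σ, ‹_›, N, by ext x; simp only [DFA.mem_accepts, DFA.eval, hN]; rfl⟩

theorem IsRegular.image_filterMap (g : β → Option γ) {L : Language β} (hL : L.IsRegular) :
    IsRegular (List.filterMap g '' L : Language γ) := by
  classical
  obtain ⟨σ, _, M, rfl⟩ := hL
  -- letters erased by `g` become ε-moves
  let N : εNFA γ σ := ⟨fun s o => {t | ∃ b, g b = o ∧ M.step s b = t}, {M.start}, M.accept⟩
  have hpath : ∀ l s t, N.IsPath s t l ↔ ∃ w : List β, w.map g = l ∧ M.evalFrom s w = t := by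
    intro l
    induction l with
    | nil => simp
    | cons o l ih =>
      intro s t
      rw [show N.IsPath s t (o :: l) ↔ _ from N.isPath_append (x := [o]) (y := l)]
      simp only [εNFA.isPath_singleton, ih, List.map_eq_cons_iff]
      constructor
      · rintro ⟨_, ⟨b, hb, rfl⟩, w, hw, rfl⟩
        exact ⟨b :: w, ⟨b, w, rfl, hb, hw⟩, rfl⟩
      · rintro ⟨_, ⟨b, w, rfl, hb, hw⟩, rfl⟩
        exact ⟨_, ⟨b, hb, rfl⟩, w, hw, rfl⟩
  have hN : N.accepts = List.filterMap g '' M.accepts := by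
    ext x
    simp only [εNFA.mem_accepts_iff_exists_path, hpath]
    constructor
    · rintro ⟨_, _, _, rfl, hacc, rfl, w, rfl, rfl⟩
      exact ⟨w, hacc, by simp [List.reduceOption, List.filterMap_map]⟩
    · rintro ⟨w, hacc, rfl⟩
      exact ⟨_, _, _, rfl, hacc, by simp [List.reduceOption, List.filterMap_map], w, rfl, rfl⟩
  exact ⟨Set σ, inferInstance, N.toNFA.toDFA,
    by rw [NFA.toDFA_correct, εNFA.toNFA_correct, hN]⟩

theorem isRegular_singleton (x : List β) : IsRegular ({x} : Language β) := by
  refine .of_finite_range_leftQuotient <|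
    ((x.tails.finite_toSet.image fun s => ({s} : Language β)).insert 0).subset ?_
  rintro _ ⟨y, rfl⟩
  by_cases h : ∃ z, y ++ z = x
  · obtain ⟨z, rfl⟩ := h
    refine Or.inr ⟨z, (List.mem_tails _ _).2 (List.suffix_append y z), ?_⟩
    ext w
    change w = z ↔ y ++ w = y ++ z
    simp
  · left
    ext w
    exact iff_of_false (fun hw => h ⟨w, hw⟩) (notMem_zero w)

theorem isRegular_top : IsRegular (⊤ : Language β) :=
  .of_finite_range_leftQuotient <| (Set.finite_singleton ⊤).subset <| by
    rintro _ ⟨y, rfl⟩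
    exact Set.eq_univ_of_forall fun _ => trivial

theorem leftQuotient_mul (A B : Language β) (x : List β) :
    (A * B).leftQuotient x =
      A.leftQuotient x * B + sSup {K | ∃ x₁ ∈ A, ∃ x₂, x₁ ++ x₂ = x ∧ K = B.leftQuotient x₂} := by
  ext y
  have mem_sSup : ∀ S : Set (Language β), y ∈ sSup S ↔ ∃ K ∈ S, y ∈ K :=
    fun _ => Set.mem_sUnion
  simp only [mem_leftQuotient, mem_add, mem_mul, mem_sSup, List.append_eq_append_iff]
  constructor
  · rintro ⟨a, ha, b, hb, ⟨c, rfl, rfl⟩ | ⟨c, rfl, rfl⟩⟩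
    · exact Or.inr ⟨_, ⟨a, ha, c, rfl, rfl⟩, hb⟩
    · exact Or.inl ⟨c, ha, b, hb, rfl⟩
  · rintro (⟨c, hc, b, hb, rfl⟩ | ⟨_, ⟨a, ha, c, rfl, rfl⟩, hb⟩)
    · exact ⟨_, hc, b, hb, by simp⟩
    · exact ⟨a, ha, _, hb, by simp⟩

/-- By Myhill–Nerode: a left quotient of `A * B` is determined by one of
`A` and a set of those of `B`. -/
theorem IsRegular.mul {A B : Language β} (hA : A.IsRegular) (hB : B.IsRegular) :
    (A * B).IsRegular := by
  refine .of_finite_range_leftQuotient <|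
    ((hA.finite_range_leftQuotient.prod hB.finite_range_leftQuotient.finite_subsets).image
      fun P => P.1 * B + sSup P.2).subset ?_
  rintro _ ⟨x, rfl⟩
  refine ⟨(A.leftQuotient x, _), ⟨⟨x, rfl⟩, ?_⟩, (leftQuotient_mul A B x).symm⟩
  rintro _ ⟨x₁, -, x₂, -, rfl⟩
  exact ⟨x₂, rfl⟩

end Language

open Language

theorem isRationalRel_of_isRegular {α δ : Type} (f₁ f₂ : δ → Option α) {L : Language δ}
    (hL : L.IsRegular) : IsRationalRel {p | ∃ z ∈ L, p = (z.filterMap f₁, z.filterMap f₂)} := by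
  refine ⟨_, hL.image_filterMap fun d => some (f₁ d, f₂ d), ?_⟩
  ext p
  constructor
  · rintro ⟨z, hz, rfl⟩
    exact ⟨_, ⟨z, hz, rfl⟩, by simp⟩
  · rintro ⟨_, ⟨z, hz, rfl⟩, rfl⟩
    exact ⟨z, hz, by simp⟩

namespace IsRationalRel

variable {α : Type} {R R₁ R₂ : Set (List α × List α)}

theorem inv (h : IsRationalRel R) : IsRationalRel {p | (p.2, p.1) ∈ R} := by
  obtain ⟨L, hL, rfl⟩ := h
  convert isRationalRel_of_isRegular Prod.snd Prod.fst hL using 1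
  ext ⟨u, v⟩
  simp [and_comm]

theorem union (h₁ : IsRationalRel R₁) (h₂ : IsRationalRel R₂) : IsRationalRel (R₁ ∪ R₂) := by
  obtain ⟨L₁, hL₁, rfl⟩ := h₁
  obtain ⟨L₂, hL₂, rfl⟩ := h₂
  refine ⟨L₁ + L₂, hL₁.add hL₂, ?_⟩
  ext p
  simp only [Set.mem_union, Set.mem_ofPred_eq, mem_add, or_and_right, exists_or]

theorem isRegular_preimage (h : IsRationalRel R) {E : Language α} (hE : E.IsRegular) :
    IsRegular {u : List α | ∃ v ∈ E, (u, v) ∈ R} := by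
  obtain ⟨L, hL, rfl⟩ := h
  refine (congrArg IsRegular ?_).mpr <|
    (hL.inf (hE.preimage_filterMap Prod.snd)).image_filterMap Prod.fst
  ext u
  constructor
  · rintro ⟨_, hv, z, hz, h⟩
    obtain ⟨rfl, rfl⟩ := Prod.mk.inj h
    exact ⟨z, ⟨hz, hv⟩, rfl⟩
  · rintro ⟨z, ⟨hz, hv⟩, rfl⟩
    exact ⟨_, hv, z, hz, rfl⟩

end IsRationalRel

namespace Language.IsRegular

variable {α : Type} {E : Language α}

theorem isRationalRel_diag (hE : E.IsRegular) : IsRationalRel {p | ∃ u ∈ E, p = (u, u)} := by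
  simpa using isRationalRel_of_isRegular some some hE

/-- Witnessed by the words `u.map inl ++ v.map inr`: `inl a` is read on the first tape only,
`inr a` on both. -/
theorem isRationalRel_dropPrefix (hE : E.IsRegular) :
    IsRationalRel {p | ∃ u ∈ E, ∃ v : List α, p = (u ++ v, v)} := by
  convert isRationalRel_of_isRegular (Sum.elim some some) (Sum.elim (fun _ => none) some)
    ((hE.image_filterMap (some ∘ Sum.inl)).mul (isRegular_top.image_filterMap (some ∘ Sum.inr)))
    using 1
  ext ⟨w, v⟩
  constructor
  · rintro ⟨u, hu, v, h⟩
    refine ⟨u.map Sum.inl ++ v.map Sum.inr,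
      append_mem_mul ⟨u, hu, by simp⟩ ⟨v, trivial, by simp⟩, ?_⟩
    simpa [List.filterMap_map, Function.comp_def] using h
  · rintro ⟨z, hz, h⟩
    obtain ⟨_, ⟨u, hu, rfl⟩, _, ⟨v, -, rfl⟩, rfl⟩ := mem_mul.1 hz
    refine ⟨u, hu, v, ?_⟩
    simpa [List.filterMap_map, Function.comp_def] using h

end Language.IsRegular

section Composition

variable {α : Type}

def eraseBlank : Option α × Option α → Option (Option α × Option α)
  | (none, none) => none
  | p => some p

@[simp] theorem eraseBlank_none_none :
    eraseBlank ((none, none) : Option α × Option α) = none := rfl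

@[simp] theorem eraseBlank_some_left (a : α) (b : Option α) :
    eraseBlank (some a, b) = some (some a, b) := rfl

@[simp] theorem eraseBlank_some_right (a : Option α) (b : α) :
    eraseBlank (a, some b) = some (a, some b) := by
  cases a <;> rfl

@[simp] theorem eraseBlank_bind_fst (p : Option α × Option α) :
    (eraseBlank p).bind Prod.fst = p.1 := by
  rcases p with ⟨_ | _, _ | _⟩ <;> rfl

@[simp] theorem eraseBlank_bind_snd (p : Option α × Option α) :
    (eraseBlank p).bind Prod.snd = p.2 := by
  rcases p with ⟨_ | _, _ | _⟩ <;> rfl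

theorem exists_merge (x₁ x₂ : List (Option α × Option α))
    (h : x₁.filterMap Prod.snd = x₂.filterMap Prod.fst) :
    ∃ t : List (Option α × Option α × Option α),
      t.filterMap (fun t => eraseBlank (t.1, t.2.1)) = x₁.filterMap eraseBlank ∧
      t.filterMap (fun t => eraseBlank t.2) = x₂.filterMap eraseBlank := by
  induction x₁ generalizing x₂ with
  | nil =>
    refine ⟨x₂.map ((none : Option α), ·), ?_, ?_⟩
    · have hx₂ : ∀ p ∈ x₂, p.1 = none := by simpa using h.symm
      simp only [List.filterMap_map, List.filterMap_nil, List.filterMap_eq_nil_iff]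
      intro p hp
      simp [hx₂ p hp]
    · simp [List.filterMap_map]
  | cons p r₁ ih₁ =>
    rcases p with ⟨a, _ | b⟩
    · obtain ⟨t, h₁, h₂⟩ := ih₁ x₂ (by simpa using h)
      exact ⟨(a, none, none) :: t, by simp [List.filterMap_cons, h₁],
        by simp [List.filterMap_cons, h₂]⟩
    · induction x₂ with
      | nil => simp at h
      | cons q r₂ ih₂ =>
        rcases q with ⟨_ | b', c⟩
        · obtain ⟨t, h₁, h₂⟩ := ih₂ (by simpa using h)
          exact ⟨(none, none, c) :: t, by simp [List.filterMap_cons, h₁],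
            by simp [List.filterMap_cons, h₂]⟩
        · obtain ⟨rfl, h'⟩ : b = b' ∧ _ := by simpa using h
          obtain ⟨t, h₁, h₂⟩ := ih₁ r₂ h'
          exact ⟨(a, some b, c) :: t, by simp [h₁], by simp [h₂]⟩

theorem IsRationalRel.comp {R₁ R₂ : Set (List α × List α)} (h₁ : IsRationalRel R₁)
    (h₂ : IsRationalRel R₂) : IsRationalRel {p | ∃ w, (p.1, w) ∈ R₁ ∧ (w, p.2) ∈ R₂} := by
  obtain ⟨L₁, hL₁, rfl⟩ := h₁
  obtain ⟨L₂, hL₂, rfl⟩ := h₂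
  let e₁₂ : Option α × Option α × Option α → Option (Option α × Option α) :=
    fun t => eraseBlank (t.1, t.2.1)
  let e₂₃ : Option α × Option α × Option α → Option (Option α × Option α) :=
    fun t => eraseBlank t.2
  -- words on three tapes whose tapes 1–2 and 2–3 are, up to letters `(none, none)`,
  -- witnesses in `L₁` and `L₂`
  let T : Language (Option α × Option α × Option α) :=
    List.filterMap e₁₂ ⁻¹' (List.filterMap eraseBlank '' L₁) ⊓
      List.filterMap e₂₃ ⁻¹' (List.filterMap eraseBlank '' L₂)
  have hT : T.IsRegular :=
    ((hL₁.image_filterMap _).preimage_filterMap _).inf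
      ((hL₂.image_filterMap _).preimage_filterMap _)
  convert isRationalRel_of_isRegular (·.1) (·.2.2) hT using 1
  ext ⟨u, v⟩
  constructor
  · rintro ⟨w, ⟨x₁, hx₁, h₁⟩, ⟨x₂, hx₂, h₂⟩⟩
    obtain ⟨rfl, rfl⟩ := Prod.mk.inj h₁
    obtain ⟨hw, rfl⟩ := Prod.mk.inj h₂
    obtain ⟨t, ht₁, ht₂⟩ := exists_merge x₁ x₂ hw
    refine ⟨t, ⟨⟨x₁, hx₁, ht₁.symm⟩, ⟨x₂, hx₂, ht₂.symm⟩⟩, ?_⟩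
    have hu := congrArg (List.filterMap Prod.fst) ht₁
    have hv := congrArg (List.filterMap Prod.snd) ht₂
    simp only [List.filterMap_filterMap, eraseBlank_bind_fst, eraseBlank_bind_snd]
      at hu hv
    exact Prod.ext hu.symm hv.symm
  · rintro ⟨t, ⟨⟨x₁, hx₁, ht₁⟩, ⟨x₂, hx₂, ht₂⟩⟩, h⟩
    obtain ⟨rfl, rfl⟩ := Prod.mk.inj h
    have hu := congrArg (List.filterMap Prod.fst) ht₁
    have hw₁ := congrArg (List.filterMap Prod.snd) ht₁
    have hw₂ := congrArg (List.filterMap Prod.fst) ht₂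
    have hv := congrArg (List.filterMap Prod.snd) ht₂
    simp only [e₁₂, e₂₃, List.filterMap_filterMap, eraseBlank_bind_fst, eraseBlank_bind_snd]
      at hu hw₁ hw₂ hv
    exact ⟨t.filterMap (·.2.1), ⟨x₁, hx₁, Prod.ext hu.symm hw₁.symm⟩,
      ⟨x₂, hx₂, Prod.ext hw₂.symm hv.symm⟩⟩

end Composition

section WPDL

variable {α AP REL : Type} (Rb : REL → Set (List α × List α)) (V : AP → Set (List α))

mutual

theorem isRationalRel_wRel (hRb : ∀ π, IsRationalRel (Rb π)) (hV : ∀ p, IsRegular (V p)) :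
    ∀ β : WProg α AP REL, IsRationalRel (WRel Rb V β)
  | .base π => hRb π
  | .inv β => (isRationalRel_wRel hRb hV β).inv
  | .union β γ => (isRationalRel_wRel hRb hV β).union (isRationalRel_wRel hRb hV γ)
  | .comp β γ => (isRationalRel_wRel hRb hV β).comp (isRationalRel_wRel hRb hV γ)
  | .test φ => (isRegular_wExt hRb hV φ).isRationalRel_diag
  | .push φ => (isRegular_wExt hRb hV φ).isRationalRel_dropPrefix

theorem isRegular_wExt (hRb : ∀ π, IsRationalRel (Rb π)) (hV : ∀ p, IsRegular (V p)) :
    ∀ φ : WForm α AP REL, IsRegular (WExt Rb V φ)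
  | .atom p => hV p
  | .letter a => isRegular_singleton [a]
  | .neg φ => (isRegular_wExt hRb hV φ).compl
  | .disj φ ψ => (isRegular_wExt hRb hV φ).add (isRegular_wExt hRb hV ψ)
  | .dia β φ => (isRationalRel_wRel hRb hV β).isRegular_preimage (isRegular_wExt hRb hV φ)

end

end WPDL

/-- In a rational Kripke word-model over a finite alphabet (state set
`Σ*`, rational atomic relations, regular atomic valuations), every WPDL program
defines a rational relation and every WPDL formula has a regular extension. -/
theorem wpdl_rational_and_regular {α AP REL : Type} [Fintype α]
    (Rb : REL → Set (List α × List α)) (hRb : ∀ π, IsRationalRel (Rb π))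
    (V : AP → Set (List α)) (hV : ∀ p, Language.IsRegular (V p)) :
    (∀ β : WProg α AP REL, IsRationalRel (WRel Rb V β)) ∧
    (∀ φ : WForm α AP REL, Language.IsRegular (WExt Rb V φ)) :=
  ⟨isRationalRel_wRel Rb V hRb hV, isRegular_wExt Rb V hRb hV⟩
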